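/- (Counting Lemma for Graphons) Let F be a simple finite graph with edge set E(F), and let W, W' : [0,1]² → [0,1] be graphons (symmetric measurable functions). Then |t(F,W) − t(F,W')| ≤ e(F) · ‖W − W'‖_□, where e(F) = |E(F)|. -/

import Mathlib

open MeasureTheory Set

noncomputable def cutNorm (W : ℝ → ℝ → ℝ) : ℝ :=
  sSup {r : ℝ | ∃ S T : Set ℝ, MeasurableSet S ∧ MeasurableSet T ∧ S ⊆ Set.Icc 0 1 ∧ T ⊆ Set.Icc 0 1 ∧
    r = |∫ p in S ×ˢ T, W p.1 p.2|}

/-- Homomorphism density of a finite simple graph F in a kernel W, integrating over [0,1]^V(F). -/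
noncomputable def homDensity {V : Type*} [Fintype V] [DecidableEq V]
    (F : SimpleGraph V) [DecidableRel F.Adj] (W : ℝ → ℝ → ℝ) : ℝ :=
  ∫ x : V → ℝ, (∏ e ∈ F.edgeFinset, W (x (Quot.out e).1) (x (Quot.out e).2))
    ∂(MeasureTheory.Measure.pi fun _ => MeasureTheory.volume.restrict (Set.Icc 0 1))

/-- W is a graphon: symmetric, measurable, [0,1]-valued. -/
def IsGraphon (W : ℝ → ℝ → ℝ) : Prop :=
  (∀ x y, W x y = W y x) ∧ Measurable (Function.uncurry W) ∧ ∀ x y, W x y ∈ Set.Icc (0:ℝ) 1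

/-!
Replace the factors `W` by `W'` one edge at a time. Two consecutive hybrid densities differ by
the integral of `(W - W')(x_a, x_b)` against a product of `[0,1]`-valued edge factors, in which the
edges through `b` do not involve `x_a` (the edge `ab` itself has been taken out) and the remaining
ones do not involve `x_b`. Freezing all the other coordinates, the integral becomes
`∫∫ f(x) U(x, y) g(y)` with `0 ≤ f, g ≤ 1`; this is linear in `f` and in `g`, so its absolute value
does not decrease when `f` and then `g` are replaced by suitable indicator functions, which
bounds it by `‖U‖_□`.
-/

open Function

local notation "μ₀" => volume.restrict (Icc (0 : ℝ) 1)

instance : IsProbabilityMeasure μ₀ := ⟨by simp [Real.volume_Icc]⟩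

theorem abs_integral_le_of_abs_le {α : Type*} [MeasurableSpace α] {μ : Measure α}
    [IsProbabilityMeasure μ] {f : α → ℝ} {C : ℝ} (hf : ∀ x, |f x| ≤ C) : |∫ x, f x ∂μ| ≤ C := by
  simpa using norm_integral_le_of_norm_le_const (μ := μ) (f := f)
    (ae_of_all _ fun x => (Real.norm_eq_abs _).trans_le (hf x))

theorem integrable_of_abs_le_one {α : Type*} [MeasurableSpace α] {μ : Measure α}
    [IsFiniteMeasure μ] {f : α → ℝ} (hf : Measurable f) (hf1 : ∀ x, |f x| ≤ 1) : Integrable f μ :=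
  .of_bound hf.aestronglyMeasurable 1 (ae_of_all _ fun x => (hf1 x : ‖f x‖ ≤ 1))

theorem abs_le_one_of_mem_Icc {r : ℝ} (hr : r ∈ Icc 0 1) : |r| ≤ 1 :=
  abs_le.2 ⟨by linarith [hr.1], hr.2⟩

theorem abs_mul_le_one {r s : ℝ} (hr : |r| ≤ 1) (hs : |s| ≤ 1) : |r * s| ≤ 1 :=
  (abs_mul r s).trans_le (mul_le_one₀ hr (abs_nonneg s) hs)

theorem exists_abs_integral_mul_le_abs_setIntegral {α : Type*} [MeasurableSpace α]
    {μ : Measure α} {f h : α → ℝ} (hf : AEStronglyMeasurable f μ) (hf01 : ∀ x, f x ∈ Icc 0 1)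
    (hm : Measurable h) (hi : Integrable h μ) :
    ∃ S, MeasurableSet S ∧ |∫ x, f x * h x ∂μ| ≤ |∫ x in S, h x ∂μ| := by
  set P := {x | 0 ≤ h x}
  have hP : MeasurableSet P := measurableSet_le measurable_const hm
  have hfh : Integrable (fun x => f x * h x) μ :=
    hi.bdd_mul hf (ae_of_all _ fun x => abs_le_one_of_mem_Icc (hf01 x))
  -- `f h` lies between the negative and the positive part of `h`
  have upper : ∫ x, f x * h x ∂μ ≤ ∫ x in P, h x ∂μ := by
    rw [← integral_indicator hP]
    refine integral_mono hfh (hi.indicator hP) fun x => ?_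
    obtain ⟨hf0, hf1⟩ := hf01 x
    by_cases hx : 0 ≤ h x <;> simp [P, hx] <;> nlinarith
  have lower : ∫ x in Pᶜ, h x ∂μ ≤ ∫ x, f x * h x ∂μ := by
    rw [← integral_indicator hP.compl]
    refine integral_mono (hi.indicator hP.compl) hfh fun x => ?_
    obtain ⟨hf0, hf1⟩ := hf01 x
    by_cases hx : 0 ≤ h x <;> simp [P, hx] <;> nlinarith
  rcases le_total 0 (∫ x, f x * h x ∂μ) with hpos | hneg
  · exact ⟨P, hP, (abs_of_nonneg hpos).trans_le (upper.trans (le_abs_self _))⟩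
  · exact ⟨Pᶜ, hP.compl,
      (abs_of_nonpos hneg).trans_le ((neg_le_neg lower).trans (neg_le_abs _))⟩

section CutNorm

variable {U : ℝ → ℝ → ℝ}

theorem abs_setIntegral_prod_le_one (hU : ∀ x y, |U x y| ≤ 1) {S T : Set ℝ}
    (hS : S ⊆ Icc 0 1) (hT : T ⊆ Icc 0 1) : |∫ p in S ×ˢ T, U p.1 p.2| ≤ 1 := by
  have hST : volume (S ×ˢ T) ≤ 1 := by
    rw [Measure.volume_eq_prod, Measure.prod_prod]
    calc volume S * volume T ≤ volume (Icc (0 : ℝ) 1) * volume (Icc (0 : ℝ) 1) := by gcongr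
      _ = 1 := by simp [Real.volume_Icc]
  calc |∫ p in S ×ˢ T, U p.1 p.2| ≤ 1 * volume.real (S ×ˢ T) :=
        norm_setIntegral_le_of_norm_le_const (hST.trans_lt ENNReal.one_lt_top)
          fun p _ => (Real.norm_eq_abs _).trans_le (hU p.1 p.2)
    _ ≤ 1 := by simpa [measureReal_def] using ENNReal.toReal_mono ENNReal.one_ne_top hST

theorem abs_setIntegral_setIntegral_le_cutNorm (hUm : Measurable (uncurry U))
    (hU : ∀ x y, |U x y| ≤ 1) {S T : Set ℝ} (hS : MeasurableSet S) (hT : MeasurableSet T) :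
    |∫ x in S, ∫ y in T, U x y ∂μ₀ ∂μ₀| ≤ cutNorm U := by
  rw [Measure.restrict_restrict hS, Measure.restrict_restrict hT]
  have hint : IntegrableOn (fun p : ℝ × ℝ => U p.1 p.2) ((S ∩ Icc 0 1) ×ˢ (T ∩ Icc 0 1))
      (volume.prod volume) := by
    refine IntegrableOn.of_bound ?_ hUm.aestronglyMeasurable 1
      (ae_of_all _ fun p => (Real.norm_eq_abs _).trans_le (hU p.1 p.2))
    rw [Measure.prod_prod]
    exact ENNReal.mul_lt_top (measure_inter_lt_top_of_right_ne_top (by simp [Real.volume_Icc]))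
      (measure_inter_lt_top_of_right_ne_top (by simp [Real.volume_Icc]))
  rw [← setIntegral_prod _ hint]
  refine le_csSup ⟨1, ?_⟩ ⟨_, _, hS.inter measurableSet_Icc, hT.inter measurableSet_Icc,
    inter_subset_right, inter_subset_right, rfl⟩
  rintro r ⟨S', T', -, -, hS', hT', rfl⟩
  exact abs_setIntegral_prod_le_one hU hS' hT'

theorem abs_setIntegral_integral_mul_le_cutNorm (hUm : Measurable (uncurry U))
    (hU : ∀ x y, |U x y| ≤ 1) {S : Set ℝ} (hS : MeasurableSet S) {g : ℝ → ℝ}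
    (hgm : Measurable g) (hg : ∀ y, g y ∈ Icc 0 1) :
    |∫ x in S, ∫ y, U x y * g y ∂μ₀ ∂μ₀| ≤ cutNorm U := by
  have hUg : Integrable (uncurry fun x y => U x y * g y) (((μ₀).restrict S).prod μ₀) := by
    exact integrable_of_abs_le_one (hUm.mul (hgm.comp measurable_snd))
      fun p => abs_mul_le_one (hU p.1 p.2) (abs_le_one_of_mem_Icc (hg p.2))
  have hUS : Measurable fun y => ∫ x in S, U x y ∂μ₀ :=
    (hUm.stronglyMeasurable.integral_prod_left' (μ := (μ₀).restrict S)).measurable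
  obtain ⟨T, hT, hgT⟩ := exists_abs_integral_mul_le_abs_setIntegral (μ := μ₀)
    hgm.aestronglyMeasurable hg hUS
    (integrable_of_abs_le_one (μ := ((μ₀).restrict S).prod μ₀) hUm
      fun p => hU p.1 p.2).integral_prod_right
  calc |∫ x in S, ∫ y, U x y * g y ∂μ₀ ∂μ₀| = |∫ y, g y * ∫ x in S, U x y ∂μ₀ ∂μ₀| := by
        rw [integral_integral_swap hUg]
        simp_rw [mul_comm _ (g _), integral_const_mul]
    _ ≤ |∫ y in T, ∫ x in S, U x y ∂μ₀ ∂μ₀| := hgT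
    _ = |∫ x in S, ∫ y in T, U x y ∂μ₀ ∂μ₀| := by
        rw [integral_integral_swap (integrable_of_abs_le_one hUm fun p => hU p.1 p.2)]
    _ ≤ cutNorm U := abs_setIntegral_setIntegral_le_cutNorm hUm hU hS hT

theorem abs_integral_integral_mul_le_cutNorm (hUm : Measurable (uncurry U))
    (hU : ∀ x y, |U x y| ≤ 1) {f g : ℝ → ℝ} (hfm : Measurable f) (hf : ∀ x, f x ∈ Icc 0 1)
    (hgm : Measurable g) (hg : ∀ y, g y ∈ Icc 0 1) :
    |∫ x, ∫ y, f x * U x y * g y ∂μ₀ ∂μ₀| ≤ cutNorm U := by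
  have hUg : Measurable (uncurry fun x y => U x y * g y) := hUm.mul (hgm.comp measurable_snd)
  have hUgx : Measurable fun x => ∫ y, U x y * g y ∂μ₀ :=
    (hUg.stronglyMeasurable.integral_prod_right' (ν := μ₀)).measurable
  obtain ⟨S, hS, hfS⟩ := exists_abs_integral_mul_le_abs_setIntegral (μ := μ₀)
    hfm.aestronglyMeasurable hf hUgx (integrable_of_abs_le_one hUgx fun x =>
      abs_integral_le_of_abs_le fun y => abs_mul_le_one (hU x y) (abs_le_one_of_mem_Icc (hg y)))
  calc |∫ x, ∫ y, f x * U x y * g y ∂μ₀ ∂μ₀| = |∫ x, f x * ∫ y, U x y * g y ∂μ₀ ∂μ₀| := by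
        simp_rw [mul_assoc, integral_const_mul]
    _ ≤ |∫ x in S, ∫ y, U x y * g y ∂μ₀ ∂μ₀| := hfS
    _ ≤ cutNorm U := abs_setIntegral_integral_mul_le_cutNorm hUm hU hS hgm hg

end CutNorm

section Update

variable {ι : Type*} [Fintype ι] [DecidableEq ι] {α : ι → Type*} [∀ i, MeasurableSpace (α i)]
  (μ : ∀ i, Measure (α i)) [∀ i, IsProbabilityMeasure (μ i)]

theorem measurePreserving_update (i : ι) :
    MeasurePreserving (fun p : α i × (∀ j, α j) => update p.2 i p.1) ((μ i).prod (Measure.pi μ))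
      (Measure.pi μ) := by
  refine ⟨by fun_prop, (Measure.pi_eq fun s hs => ?_).symm⟩
  have hpre : (fun p : α i × (∀ j, α j) => update p.2 i p.1) ⁻¹' univ.pi s =
      s i ×ˢ univ.pi (update s i univ) := by
    ext ⟨t, v⟩
    simp only [mem_preimage, mem_univ_pi, mem_prod]
    constructor
    · intro h
      refine ⟨by simpa using h i, fun j => ?_⟩
      rcases eq_or_ne j i with rfl | hj
      · simp
      · simpa [hj] using h j
    · rintro ⟨ht, hv⟩ j
      rcases eq_or_ne j i with rfl | hj
      · simpa using ht
      · simpa [hj] using hv j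
  rw [Measure.map_apply (by fun_prop) (MeasurableSet.univ_pi hs), hpre, Measure.prod_prod,
    Measure.pi_pi, ← Finset.mul_prod_erase _ _ (Finset.mem_univ i),
    ← Finset.mul_prod_erase _ _ (Finset.mem_univ i)]
  simp only [update_self, measure_univ, one_mul]
  congr 1
  exact Finset.prod_congr rfl fun j hj => by rw [update_of_ne (Finset.ne_of_mem_erase hj)]

variable {E : Type*} [NormedAddCommGroup E] [NormedSpace ℝ E] {φ : (∀ j, α j) → E}

theorem MeasureTheory.Integrable.integral_update (hφ : Integrable φ (Measure.pi μ)) (i : ι) :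
    Integrable (fun v => ∫ t, φ (update v i t) ∂μ i) (Measure.pi μ) :=
  Integrable.integral_prod_right (f := fun p : α i × (∀ j, α j) => φ (update p.2 i p.1))
    (((measurePreserving_update μ i).integrable_comp hφ.aestronglyMeasurable).2 hφ)

theorem integral_eq_integral_integral_update (hφ : Integrable φ (Measure.pi μ)) (i : ι) :
    ∫ v, φ v ∂Measure.pi μ = ∫ v, ∫ t, φ (update v i t) ∂μ i ∂Measure.pi μ := by
  have hp := measurePreserving_update μ i
  calc ∫ v, φ v ∂Measure.pi μ = ∫ p, φ (update p.2 i p.1) ∂(μ i).prod (Measure.pi μ) := by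
        rw [← integral_map hp.measurable.aemeasurable
          (by rw [hp.map_eq]; exact hφ.aestronglyMeasurable), hp.map_eq]
    _ = _ := integral_prod_symm _ ((hp.integrable_comp hφ.aestronglyMeasurable).2 hφ)

end Update

section Core

variable {V : Type*} [Fintype V] [DecidableEq V] {U : ℝ → ℝ → ℝ}

theorem abs_integral_mul_mul_le_cutNorm {a b : V} (hab : a ≠ b) (hUm : Measurable (uncurry U))
    (hU : ∀ x y, |U x y| ≤ 1) {f g : (V → ℝ) → ℝ} (hfm : Measurable f) (hf : ∀ v, f v ∈ Icc 0 1)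
    (hgm : Measurable g) (hg : ∀ v, g v ∈ Icc 0 1) (hfb : ∀ v t, f (update v b t) = f v)
    (hga : ∀ v t, g (update v a t) = g v) :
    |∫ v, f v * U (v a) (v b) * g v ∂Measure.pi fun _ => μ₀| ≤ cutNorm U := by
  set Φ : (V → ℝ) → ℝ := fun v => f v * U (v a) (v b) * g v
  have hΦ : Integrable Φ (Measure.pi fun _ => μ₀) :=
    integrable_of_abs_le_one (by fun_prop) fun v => abs_mul_le_one
      (abs_mul_le_one (abs_le_one_of_mem_Icc (hf v)) (hU _ _)) (abs_le_one_of_mem_Icc (hg v))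
  have hsplit : ∀ v x y,
      Φ (update (update v a x) b y) = f (update v a x) * U x y * g (update v b y) := by
    intro v x y
    have hgv : g (update (update v a x) b y) = g (update v b y) := by rw [update_comm hab, hga]
    simp only [Φ, hfb, hgv, update_self, update_of_ne hab]
  rw [integral_eq_integral_integral_update _ hΦ b,
    integral_eq_integral_integral_update _ (hΦ.integral_update _ b) a]
  refine abs_integral_le_of_abs_le fun v => ?_
  simp only [hsplit]
  exact abs_integral_integral_mul_le_cutNorm hUm hU (hfm.comp (measurable_update v))
    (fun _ => hf _) (hgm.comp (measurable_update v)) (fun _ => hg _)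

end Core

section Graph

variable {V : Type*}

noncomputable def edgeProduct (K : Sym2 V → ℝ → ℝ → ℝ) (P : Finset (Sym2 V)) (x : V → ℝ) : ℝ :=
  ∏ e ∈ P, K e (x (Quot.out e).1) (x (Quot.out e).2)

variable {K : Sym2 V → ℝ → ℝ → ℝ}

theorem measurable_edgeProduct (hK : ∀ e, Measurable (uncurry (K e))) (P : Finset (Sym2 V)) :
    Measurable (edgeProduct K P) :=
  Finset.measurable_prod _ fun e _ =>
    (hK e).comp (f := fun x : V → ℝ => (x (Quot.out e).1, x (Quot.out e).2)) (by fun_prop)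

theorem edgeProduct_mem_Icc (hK : ∀ e x y, K e x y ∈ Icc 0 1) (P : Finset (Sym2 V)) (x : V → ℝ) :
    edgeProduct K P x ∈ Icc 0 1 :=
  ⟨Finset.prod_nonneg fun _ _ => (hK _ _ _).1,
    Finset.prod_le_one (fun _ _ => (hK _ _ _).1) fun _ _ => (hK _ _ _).2⟩

theorem edgeProduct_update [DecidableEq V] {P : Finset (Sym2 V)} {c : V} (hc : ∀ e ∈ P, c ∉ e)
    (x : V → ℝ) (t : ℝ) : edgeProduct K P (update x c t) = edgeProduct K P x :=
  Finset.prod_congr rfl fun e he => by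
    rw [update_of_ne (ne_of_mem_of_not_mem (Sym2.out_fst_mem e) (hc e he)),
      update_of_ne (ne_of_mem_of_not_mem (Sym2.out_snd_mem e) (hc e he))]

section Hybrid

variable [DecidableEq V] (W W' : ℝ → ℝ → ℝ)

def hybridKernel (s : Finset (Sym2 V)) (e : Sym2 V) : ℝ → ℝ → ℝ :=
  if e ∈ s then W else W'

variable {W W'}

theorem measurable_hybridKernel (hWm : Measurable (uncurry W)) (hW'm : Measurable (uncurry W'))
    (s : Finset (Sym2 V)) (e : Sym2 V) : Measurable (uncurry (hybridKernel W W' s e)) := by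
  unfold hybridKernel
  split_ifs <;> assumption

theorem hybridKernel_mem_Icc (hW : ∀ x y, W x y ∈ Icc 0 1) (hW' : ∀ x y, W' x y ∈ Icc 0 1)
    (s : Finset (Sym2 V)) (e : Sym2 V) (x y : ℝ) : hybridKernel W W' s e x y ∈ Icc 0 1 := by
  unfold hybridKernel
  split_ifs
  exacts [hW x y, hW' x y]

theorem edgeProduct_hybridKernel_insert_sub {P s : Finset (Sym2 V)} {e : Sym2 V} (he : e ∈ P)
    (hes : e ∉ s) (x : V → ℝ) :
    edgeProduct (hybridKernel W W' (insert e s)) P x - edgeProduct (hybridKernel W W' s) P x =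
      (W (x (Quot.out e).1) (x (Quot.out e).2) - W' (x (Quot.out e).1) (x (Quot.out e).2)) *
        edgeProduct (hybridKernel W W' s) (P.erase e) x := by
  have hrest : edgeProduct (hybridKernel W W' (insert e s)) (P.erase e) x =
      edgeProduct (hybridKernel W W' s) (P.erase e) x :=
    Finset.prod_congr rfl fun e' he' => by
      simp [hybridKernel, Finset.ne_of_mem_erase he']
  rw [edgeProduct, edgeProduct, ← Finset.mul_prod_erase _ _ he, ← Finset.mul_prod_erase _ _ he,
    ← edgeProduct, ← edgeProduct, hrest]
  simp only [hybridKernel, if_pos (Finset.mem_insert_self e s), if_neg hes]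
  ring

end Hybrid

variable [Fintype V] [DecidableEq V]

theorem abs_integral_mul_edgeProduct_le_cutNorm {U : ℝ → ℝ → ℝ} (hUm : Measurable (uncurry U))
    (hU : ∀ x y, |U x y| ≤ 1) (hKm : ∀ e, Measurable (uncurry (K e)))
    (hK : ∀ e x y, K e x y ∈ Icc 0 1) {a b : V} (hab : a ≠ b) {P : Finset (Sym2 V)}
    (hP : s(a, b) ∉ P) :
    |∫ x, U (x a) (x b) * edgeProduct K P x ∂Measure.pi fun _ => μ₀| ≤ cutNorm U := by
  have hsplit : ∀ x, U (x a) (x b) * edgeProduct K P x =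
      edgeProduct K {e ∈ P | b ∉ e} x * U (x a) (x b) * edgeProduct K {e ∈ P | b ∈ e} x := by
    intro x
    rw [edgeProduct, ← Finset.prod_filter_mul_prod_filter_not P (b ∈ ·)]
    simp only [edgeProduct]
    ring
  simp only [hsplit]
  refine abs_integral_mul_mul_le_cutNorm hab hUm hU (measurable_edgeProduct hKm _)
    (edgeProduct_mem_Icc hK _) (measurable_edgeProduct hKm _) (edgeProduct_mem_Icc hK _)
    (edgeProduct_update fun e he => (Finset.mem_filter.1 he).2)
    (edgeProduct_update fun e he hae => ?_)
  obtain ⟨heP, hbe⟩ := Finset.mem_filter.1 he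
  exact hP ((Sym2.mem_and_mem_iff hab).1 ⟨hae, hbe⟩ ▸ heP)

variable (F : SimpleGraph V) [DecidableRel F.Adj] (W W' : ℝ → ℝ → ℝ)

noncomputable def hybridDensity (s : Finset (Sym2 V)) : ℝ :=
  ∫ x, edgeProduct (hybridKernel W W' s) F.edgeFinset x ∂Measure.pi fun _ => μ₀

theorem hybridDensity_edgeFinset : hybridDensity F W W' F.edgeFinset = homDensity F W := by
  unfold hybridDensity homDensity
  congr 1
  ext x
  exact Finset.prod_congr rfl fun e he => by simp only [hybridKernel, if_pos he]

theorem hybridDensity_empty : hybridDensity F W W' ∅ = homDensity F W' := by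
  simp [hybridDensity, homDensity, edgeProduct, hybridKernel]

variable {F W W'} (hWm : Measurable (uncurry W)) (hW : ∀ x y, W x y ∈ Icc 0 1)
  (hW'm : Measurable (uncurry W')) (hW' : ∀ x y, W' x y ∈ Icc 0 1)
include hWm hW hW'm hW'

theorem abs_hybridDensity_insert_sub_le {e : Sym2 V} {s : Finset (Sym2 V)}
    (he : e ∈ F.edgeFinset) (hes : e ∉ s) :
    |hybridDensity F W W' (insert e s) - hybridDensity F W W' s| ≤
      cutNorm fun x y => W x y - W' x y := by
  have hint : ∀ s, Integrable (edgeProduct (hybridKernel W W' s) F.edgeFinset)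
      (Measure.pi fun _ => μ₀) := fun s =>
    integrable_of_abs_le_one (measurable_edgeProduct (measurable_hybridKernel hWm hW'm s) _)
      fun x => abs_le_one_of_mem_Icc (edgeProduct_mem_Icc (hybridKernel_mem_Icc hW hW' s) _ x)
  have hUm : Measurable (uncurry fun x y => W x y - W' x y) := hWm.sub hW'm
  have he_out : s((Quot.out e).1, (Quot.out e).2) = e := Quot.out_eq e
  have hne : (Quot.out e).1 ≠ (Quot.out e).2 := fun h =>
    F.not_isDiag_of_mem_edgeSet (SimpleGraph.mem_edgeFinset.1 he) (he_out ▸ Sym2.mk_isDiag_iff.2 h)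
  rw [hybridDensity, hybridDensity, ← integral_sub (hint _) (hint _)]
  simp only [edgeProduct_hybridKernel_insert_sub he hes]
  exact abs_integral_mul_edgeProduct_le_cutNorm hUm
    (fun x y => abs_sub_le_of_nonneg_of_le (hW x y).1 (hW x y).2 (hW' x y).1 (hW' x y).2)
    (measurable_hybridKernel hWm hW'm s) (hybridKernel_mem_Icc hW hW' s) hne
    (by rw [he_out]; exact Finset.notMem_erase e _)

theorem abs_hybridDensity_sub_le {s : Finset (Sym2 V)} (hs : s ⊆ F.edgeFinset) :
    |hybridDensity F W W' s - hybridDensity F W W' ∅| ≤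
      s.card * cutNorm fun x y => W x y - W' x y := by
  induction s using Finset.induction_on with
  | empty => simp
  | insert e s hes ih =>
    rw [Finset.insert_subset_iff] at hs
    calc |hybridDensity F W W' (insert e s) - hybridDensity F W W' ∅|
        ≤ |hybridDensity F W W' (insert e s) - hybridDensity F W W' s| +
          |hybridDensity F W W' s - hybridDensity F W W' ∅| := abs_sub_le _ _ _
      _ ≤ (cutNorm fun x y => W x y - W' x y) + s.card * cutNorm fun x y => W x y - W' x y :=
        add_le_add (abs_hybridDensity_insert_sub_le hWm hW hW'm hW' hs.1 hes) (ih hs.2)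
      _ = (insert e s).card * cutNorm fun x y => W x y - W' x y := by
        rw [Finset.card_insert_of_notMem hes]
        push_cast
        ring

end Graph

/-- Counting Lemma for graphons: |t(F,W) − t(F,W')| ≤ e(F)·‖W − W'‖_□. -/
theorem counting_lemma {V : Type*} [Fintype V] [DecidableEq V]
    (F : SimpleGraph V) [DecidableRel F.Adj] (W W' : ℝ → ℝ → ℝ)
    (hW : IsGraphon W) (hW' : IsGraphon W') :
    |homDensity F W - homDensity F W'| ≤
      (F.edgeFinset.card : ℝ) * cutNorm (fun x y => W x y - W' x y) := by
  obtain ⟨-, hWm, hW⟩ := hW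
  obtain ⟨-, hW'm, hW'⟩ := hW'
  rw [← hybridDensity_edgeFinset F W W', ← hybridDensity_empty F W W']
  exact abs_hybridDensity_sub_le hWm hW hW'm hW' subset_rfl
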